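/- arXiv:1205.2874 — 4 statements merged into one kernel-verified Lean document; each statement's English description precedes it below -/
import Mathlib

section
/- Fix β ∈ (0,1] and g ∈ [0,1], and let J be a random index with P(J = i) = q_i > 0. Define g̃ = (g·1_{J=i} + β)/q_i. Then E[exp(β(g − g̃))] ≤ (1 + β²/q_i)·exp(−β²/q_i) ≤ 1. -/
/-! Pulling the factor `exp (-β²/q)` contributed by the bias `β/q` out of the expectation leaves
`E[exp X]` for the centred two-point variable `X = βg(1 - 1_{J=i}/q)`, which takes the value
`βg - βg/q` with probability `q` and `βg` otherwise. Both values are at most `1`, so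
`exp x ≤ 1 + x + x²` bounds `E[exp X]` by `1 + E[X²] ≤ 1 + β²/q`. The second inequality is
`1 + t ≤ exp t`. -/

open MeasureTheory

namespace Real

lemma exp_le_one_add_add_sq {x : ℝ} (hx : x ≤ 1) : exp x ≤ 1 + x + x ^ 2 := by
  rcases le_or_gt (-1) x with hx' | hx'
  · have := (abs_le.1 (abs_exp_sub_one_sub_id_le (abs_le.2 ⟨hx', hx⟩))).2
    linarith
  · nlinarith [exp_lt_one_iff.2 (by linarith : x < 0)]

lemma one_add_mul_exp_neg_le_one (t : ℝ) : (1 + t) * exp (-t) ≤ 1 := by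
  calc (1 + t) * exp (-t) ≤ exp t * exp (-t) := by
        gcongr; linarith [add_one_le_exp t]
    _ = 1 := by rw [← exp_add, add_neg_cancel, exp_zero]

lemma two_point_exp_mean_le {x q : ℝ} (hx : 0 ≤ x) (hx1 : x ≤ 1) (hq : 0 < q) (hq1 : q ≤ 1) :
    q * exp (x - x / q) + (1 - q) * exp x ≤ 1 + x ^ 2 / q := by
  have hlow : x - x / q ≤ 1 := by
    have : x ≤ x / q := le_div_self hx hq hq1
    linarith
  calc q * exp (x - x / q) + (1 - q) * exp x
      ≤ q * (1 + (x - x / q) + (x - x / q) ^ 2) + (1 - q) * (1 + x + x ^ 2) := by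
        gcongr
        · exact exp_le_one_add_add_sq hlow
        · exact exp_le_one_add_add_sq hx1
    _ = 1 + x ^ 2 / q - x ^ 2 := by field_simp; ring
    _ ≤ 1 + x ^ 2 / q := by linarith [sq_nonneg x]

end Real

lemma integral_comp_indicator_one {Ω E : Type*} [NormedAddCommGroup E] [NormedSpace ℝ E]
    [CompleteSpace E] {m0 : MeasurableSpace Ω} {μ : Measure Ω} [IsProbabilityMeasure μ]
    {A : Set Ω} (hA : MeasurableSet A) (F : ℝ → E) :
    ∫ ω, F (A.indicator (fun _ => (1 : ℝ)) ω) ∂μ = μ.real A • F 1 + (1 - μ.real A) • F 0 := by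
  classical
  have hpiecewise : (fun ω => F (A.indicator (fun _ => (1 : ℝ)) ω))
      = A.piecewise (fun _ => F 1) (fun _ => F 0) := by
    funext ω
    by_cases hω : ω ∈ A <;> simp [hω]
  rw [hpiecewise, integral_piecewise hA integrableOn_const integrableOn_const,
    setIntegral_const, setIntegral_const, probReal_compl_eq_one_sub hA]

theorem estimator_mgf_bound
    {Ω : Type*} {m0 : MeasurableSpace Ω} {μ : Measure Ω} [IsProbabilityMeasure μ]
    (β g q : ℝ) (hβ : 0 < β) (hβ1 : β ≤ 1) (hg : 0 ≤ g) (hg1 : g ≤ 1)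
    (hq : 0 < q) (hq1 : q ≤ 1)
    (A : Set Ω) (hA : MeasurableSet A) (hAq : μ A = ENNReal.ofReal q) :
    (∫ ω, Real.exp (β * (g - (g * A.indicator (fun _ => (1 : ℝ)) ω + β) / q)) ∂μ) ≤
        (1 + β ^ 2 / q) * Real.exp (-(β ^ 2) / q) ∧
    (1 + β ^ 2 / q) * Real.exp (-(β ^ 2) / q) ≤ 1 := by
  have hμA : μ.real A = q := by rw [measureReal_def, hAq, ENNReal.toReal_ofReal hq.le]
  have hx : 0 ≤ β * g := mul_nonneg hβ.le hg
  have hx1 : β * g ≤ 1 := mul_le_one₀ hβ1 hg hg1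
  have hxβ : (β * g) ^ 2 ≤ β ^ 2 := pow_le_pow_left₀ hx (mul_le_of_le_one_right hβ.le hg1) 2
  have hbias : ∀ y : ℝ, Real.exp (β * (g - (g * y + β) / q))
      = Real.exp (β * g - β * g * y / q) * Real.exp (-(β ^ 2) / q) := by
    intro y
    rw [← Real.exp_add]
    ring_nf
  refine ⟨?_, by simpa [neg_div] using Real.one_add_mul_exp_neg_le_one (β ^ 2 / q)⟩
  rw [integral_comp_indicator_one (μ := μ) hA (fun y => Real.exp (β * (g - (g * y + β) / q))),
    hμA, hbias, hbias, smul_eq_mul, smul_eq_mul]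
  calc q * (Real.exp (β * g - β * g * 1 / q) * Real.exp (-(β ^ 2) / q))
        + (1 - q) * (Real.exp (β * g - β * g * 0 / q) * Real.exp (-(β ^ 2) / q))
      = (q * Real.exp (β * g - β * g / q) + (1 - q) * Real.exp (β * g))
          * Real.exp (-(β ^ 2) / q) := by ring_nf
    _ ≤ (1 + β ^ 2 / q) * Real.exp (-(β ^ 2) / q) := by
        refine mul_le_mul_of_nonneg_right ?_ (Real.exp_nonneg _)
        exact (Real.two_point_exp_mean_le hx hx1 hq hq1).trans (by gcongr)
end

section
/- Let p, q be probability vectors on the k-simplex with q_j = √(p_j)/∑_l √(p_l) and all p_j > 0, and let g ∈ [0,1]^k. Let J be a random index with P(J = j) = q_j, and define g'_j = g_j·1_{J=j}/q_j. Then E[(∑_j p_j g'_j)²] ≤ ∑_j p_j²/q_j ≤ ‖p‖_{1/2}. -/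
open MeasureTheory

/-!
The estimator `∑ j, p j * g'_j` equals `p J * g J / q J`, a function of `J` alone, so its second
moment is `∑ j, q j * (p j * g j / q j) ^ 2 ≤ ∑ j, p j ^ 2 / q j`. For `q j = √(p j) / S` with
`S = ∑ l, √(p l)` each term is `p j * √(p j) * S`, and `p j ≤ 1` gives `p j * √(p j) ≤ √(p j)`,
so the sum is at most `S ^ 2 = ‖p‖_{1/2}`.
-/

theorem integral_comp_eq_sum_of_fintype {Ω ι : Type*} {m0 : MeasurableSpace Ω} {μ : Measure Ω}
    [IsFiniteMeasure μ] [Fintype ι] [MeasurableSpace ι] [MeasurableSingletonClass ι]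
    {J : Ω → ι} (hJ : Measurable J) (f : ι → ℝ) :
    ∫ ω, f (J ω) ∂μ = ∑ j, μ.real {ω | J ω = j} * f j := by
  rw [← integral_map hJ.aemeasurable (by fun_prop), integral_fintype (.of_finite)]
  simp only [smul_eq_mul, map_measureReal_apply hJ (measurableSet_singleton _)]
  rfl

theorem mul_sq_mul_div_le_sq_div {q x g : ℝ} (hq : 0 ≤ q) (hg : 0 ≤ g) (hg1 : g ≤ 1) :
    q * (x * (g / q)) ^ 2 ≤ x ^ 2 / q := by
  rcases hq.eq_or_lt with rfl | hq
  · simp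
  calc q * (x * (g / q)) ^ 2 = x ^ 2 * g ^ 2 / q := by field_simp
    _ ≤ x ^ 2 * 1 / q := by gcongr; exact pow_le_one₀ hg hg1
    _ = x ^ 2 / q := by rw [mul_one]

theorem sq_div_sqrt_div_eq {x : ℝ} (hx : 0 ≤ x) (S : ℝ) :
    x ^ 2 / (√x / S) = x * √x * S := by
  rcases hx.eq_or_lt with rfl | hx
  · simp
  have hsqrt : √x ≠ 0 := (Real.sqrt_pos.2 hx).ne'
  rw [div_div_eq_mul_div, div_eq_iff hsqrt]
  linear_combination (-(x * S)) * Real.mul_self_sqrt hx.le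

theorem sum_sq_div_sqrt_weight_le {ι : Type*} [Fintype ι] {p : ι → ℝ} (hp : ∀ j, 0 ≤ p j)
    (hsum : ∑ j, p j = 1) :
    ∑ j, p j ^ 2 / (√(p j) / ∑ l, √(p l)) ≤ (∑ j, √(p j)) ^ 2 := by
  rw [Finset.sum_congr rfl fun j _ => sq_div_sqrt_div_eq (hp j) _, ← Finset.sum_mul, sq]
  gcongr with j
  have hpj1 : p j ≤ 1 := hsum ▸ Finset.single_le_sum (fun l _ => hp l) (Finset.mem_univ j)
  exact mul_le_of_le_one_left (Real.sqrt_nonneg _) hpj1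

theorem second_moment_weighted_estimator_general
    {Ω : Type*} {m0 : MeasurableSpace Ω} {μ : Measure Ω} [IsProbabilityMeasure μ]
    (k : ℕ) (p : Fin k → ℝ) (hp : ∀ j, 0 < p j) (hsum : ∑ j, p j = 1)
    (g : Fin k → ℝ) (hg : ∀ j, 0 ≤ g j) (hg1 : ∀ j, g j ≤ 1)
    (J : Ω → Fin k) (hJ : Measurable J)
    (hJdist : ∀ j, μ {ω | J ω = j} =
      ENNReal.ofReal (Real.sqrt (p j) / ∑ l, Real.sqrt (p l))) :
    (∫ ω, (∑ j, p j * (if J ω = j then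
        g j / (Real.sqrt (p j) / ∑ l, Real.sqrt (p l)) else 0)) ^ 2 ∂μ) ≤
      ∑ j, (p j) ^ 2 / (Real.sqrt (p j) / ∑ l, Real.sqrt (p l)) ∧
    (∑ j, (p j) ^ 2 / (Real.sqrt (p j) / ∑ l, Real.sqrt (p l))) ≤
      (∑ j, Real.sqrt (p j)) ^ 2 := by
  set q : Fin k → ℝ := fun j => √(p j) / ∑ l, √(p l)
  have hq : ∀ j, 0 ≤ q j := fun j => by positivity
  refine ⟨?_, sum_sq_div_sqrt_weight_le (fun j => (hp j).le) hsum⟩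
  change ∫ ω, (∑ j, p j * (if J ω = j then g j / q j else 0)) ^ 2 ∂μ ≤
    ∑ j, p j ^ 2 / q j
  have hsingle : ∀ ω, ∑ j, p j * (if J ω = j then g j / q j else 0) =
      p (J ω) * (g (J ω) / q (J ω)) := fun ω => by
    simp only [mul_ite, mul_zero, Finset.sum_ite_eq, Finset.mem_univ, if_true]
  simp only [hsingle]
  rw [integral_comp_eq_sum_of_fintype hJ (fun j => (p j * (g j / q j)) ^ 2)]
  gcongr with j
  rw [measureReal_def, hJdist j, ENNReal.toReal_ofReal (hq j)]
  exact mul_sq_mul_div_le_sq_div (hq j) (hg j) (hg1 j)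

theorem second_moment_weighted_estimator
    {Ω : Type*} {m0 : MeasurableSpace Ω} {μ : Measure Ω} [IsProbabilityMeasure μ]
    (k : ℕ) (hk : 1 ≤ k) (p : Fin k → ℝ) (hp : ∀ j, 0 < p j) (hsum : ∑ j, p j = 1)
    (g : Fin k → ℝ) (hg : ∀ j, 0 ≤ g j) (hg1 : ∀ j, g j ≤ 1)
    (J : Ω → Fin k) (hJ : Measurable J)
    (hJdist : ∀ j, μ {ω | J ω = j} =
      ENNReal.ofReal (Real.sqrt (p j) / ∑ l, Real.sqrt (p l))) :
    (∫ ω, (∑ j, p j * (if J ω = j then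
        g j / (Real.sqrt (p j) / ∑ l, Real.sqrt (p l)) else 0)) ^ 2 ∂μ) ≤
      ∑ j, (p j) ^ 2 / (Real.sqrt (p j) / ∑ l, Real.sqrt (p l)) ∧
    (∑ j, (p j) ^ 2 / (Real.sqrt (p j) / ∑ l, Real.sqrt (p l))) ≤
      (∑ j, Real.sqrt (p j)) ^ 2 :=
  second_moment_weighted_estimator_general (m0 := m0) k p hp hsum g hg hg1 J hJ hJdist
end

section
/- Let p, q be as above (q_j = √(p_j)/∑_l √(p_l)) and g ∈ [0,1]^k, with J a random index distributed according to q, and g'_j = g_j·1_{J=j}/q_j. Then E[∑_j p_j (g'_j)²] ≤ ∑_j p_j/q_j = ‖p‖_{1/2}. -/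
/-!
Since `J` has law `q`, only the `J`-th summand survives and the expectation of `∑ⱼ pⱼ g'ⱼ²` is
`∑ⱼ qⱼ · pⱼ (gⱼ / qⱼ)² = ∑ⱼ pⱼ gⱼ² / qⱼ ≤ ∑ⱼ pⱼ / qⱼ`. With `qⱼ = √pⱼ / S`, `S = ∑ₗ √pₗ`, each
`pⱼ / qⱼ = √pⱼ · S`, so the bound sums to `S²`.
-/

open MeasureTheory

theorem Real.div_sqrt_div (x c : ℝ) : x / (√x / c) = √x * c := by
  rw [div_div_eq_mul_div, mul_div_right_comm, Real.div_sqrt]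

theorem Finset.sum_div_sqrt_div_sum_sqrt {ι : Type*} (s : Finset ι) (p : ι → ℝ) :
    ∑ j ∈ s, p j / (√(p j) / ∑ l ∈ s, √(p l)) = (∑ j ∈ s, √(p j)) ^ 2 := by
  simp only [Real.div_sqrt_div, ← Finset.sum_mul, sq]

section FiniteValued

variable {Ω ι : Type*} {m0 : MeasurableSpace Ω} {μ : Measure Ω} [IsFiniteMeasure μ]
  [Fintype ι] [MeasurableSpace ι] [MeasurableSingletonClass ι] {J : Ω → ι}

theorem integral_comp_eq_sum_measureReal_fiber (hJ : Measurable J) (f : ι → ℝ) :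
    ∫ ω, f (J ω) ∂μ = ∑ i, μ.real {ω | J ω = i} * f i := by
  rw [← integral_map hJ.aemeasurable Integrable.of_finite.aestronglyMeasurable,
    integral_fintype .of_finite]
  refine Finset.sum_congr rfl fun i _ => ?_
  rw [map_measureReal_apply hJ (measurableSet_singleton i), smul_eq_mul]
  rfl

/-- Second moment of the importance-weighted estimator `c_J / q_J` at coordinate `J`; no positivity
of `q` is needed, since both sides vanish termwise where `q j = 0`. -/
theorem integral_sum_mul_ite_div_sq [DecidableEq ι] (hJ : Measurable J) {q : ι → ℝ}
    (hq : ∀ j, μ.real {ω | J ω = j} = q j) (w c : ι → ℝ) :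
    ∫ ω, ∑ j, w j * (if J ω = j then c j / q j else 0) ^ 2 ∂μ = ∑ j, w j * c j ^ 2 / q j := by
  have hfiber : ∀ i, ∑ j, w j * (if i = j then c j / q j else 0) ^ 2 = w i * (c i / q i) ^ 2 :=
    fun i => by simp [apply_ite (· ^ 2), mul_ite]
  simp only [hfiber]
  rw [integral_comp_eq_sum_measureReal_fiber hJ fun i => w i * (c i / q i) ^ 2]
  refine Finset.sum_congr rfl fun j _ => ?_
  rw [hq]
  rcases eq_or_ne (q j) 0 with h | h
  · simp [h]
  · field_simp

end FiniteValued

theorem second_moment_estimator_sq_general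
    {Ω : Type*} {m0 : MeasurableSpace Ω} {μ : Measure Ω} [IsProbabilityMeasure μ]
    (k : ℕ) (p : Fin k → ℝ) (hp : ∀ j, 0 < p j)
    (g : Fin k → ℝ) (hg : ∀ j, 0 ≤ g j) (hg1 : ∀ j, g j ≤ 1)
    (J : Ω → Fin k) (hJ : Measurable J)
    (hJdist : ∀ j, μ {ω | J ω = j} =
      ENNReal.ofReal (Real.sqrt (p j) / ∑ l, Real.sqrt (p l))) :
    (∫ ω, ∑ j, p j * (if J ω = j then
        g j / (Real.sqrt (p j) / ∑ l, Real.sqrt (p l)) else 0) ^ 2 ∂μ) ≤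
      ∑ j, p j / (Real.sqrt (p j) / ∑ l, Real.sqrt (p l)) ∧
    (∑ j, p j / (Real.sqrt (p j) / ∑ l, Real.sqrt (p l))) =
      (∑ j, Real.sqrt (p j)) ^ 2 := by
  have hq : ∀ j, μ.real {ω | J ω = j} = √(p j) / ∑ l, √(p l) := fun j => by
    rw [measureReal_def, hJdist, ENNReal.toReal_ofReal (by positivity)]
  refine ⟨?_, Finset.sum_div_sqrt_div_sum_sqrt _ p⟩
  rw [integral_sum_mul_ite_div_sq hJ hq]
  gcongr with j
  exact mul_le_of_le_one_right (hp j).le (pow_le_one₀ (hg j) (hg1 j))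

theorem second_moment_estimator_sq
    {Ω : Type*} {m0 : MeasurableSpace Ω} {μ : Measure Ω} [IsProbabilityMeasure μ]
    (k : ℕ) (hk : 1 ≤ k) (p : Fin k → ℝ) (hp : ∀ j, 0 < p j) (hsum : ∑ j, p j = 1)
    (g : Fin k → ℝ) (hg : ∀ j, 0 ≤ g j) (hg1 : ∀ j, g j ≤ 1)
    (J : Ω → Fin k) (hJ : Measurable J)
    (hJdist : ∀ j, μ {ω | J ω = j} =
      ENNReal.ofReal (Real.sqrt (p j) / ∑ l, Real.sqrt (p l))) :
    (∫ ω, ∑ j, p j * (if J ω = j then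
        g j / (Real.sqrt (p j) / ∑ l, Real.sqrt (p l)) else 0) ^ 2 ∂μ) ≤
      ∑ j, p j / (Real.sqrt (p j) / ∑ l, Real.sqrt (p l)) ∧
    (∑ j, p j / (Real.sqrt (p j) / ∑ l, Real.sqrt (p l))) =
      (∑ j, Real.sqrt (p j)) ^ 2 :=
  second_moment_estimator_sq_general (m0 := m0) k p hp g hg hg1 J hJ hJdist
end

section
/- For a weight-update scheme w_j(t+1) = w_j(t)·exp(η·g̃_j(t)) with w_j(1) = 1, and mixed distribution p_j(t) = (1−γ)·w_j(t)/∑_l w_l(t) + γ/k, if η·g̃_j(t) ≤ 1 for all j,t, then for every action i and horizon T: ∑_{t=1}^T g̃_i(t) − (1/(1−γ))·∑_{t=1}^T ∑_{j=1}^k p_j(t)·g̃_j(t) ≤ log(k)/η + (η/(1−γ))·∑_{t=1}^T ∑_{j=1}^k p_j(t)·g̃_j(t)². -/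
/-!
Potential argument. Put `Φ t = log ∑ⱼ w t j`. Since the weight of action `i` alone is
`exp (η ∑ₜ g̃ᵢ(t))`, we get `Φ (T + 1) ≥ η ∑ₜ g̃ᵢ(t)`, while `Φ 1 = log k`. By
`e^x ≤ 1 + x + x²` on `[-1, 1]` and `log y ≤ y - 1`, each round raises `Φ` by at most
`∑ⱼ (w t j / ∑ₗ w t l) (x + x²)` with `x = η g̃ⱼ(t) ≥ 0`, and mixing in uniform exploration
gives `w t j / ∑ₗ w t l ≤ p t j / (1 - γ)`. Dividing the telescoped bound by `η` gives the regret
inequality.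
-/

open Finset Real

theorem Real.exp_le_one_add_add_sq_s15 {x : ℝ} (hx : |x| ≤ 1) : exp x ≤ 1 + x + x ^ 2 := by
  linarith [(abs_le.mp (abs_exp_sub_one_sub_id_le hx)).2]

theorem weight_succ_eq_exp_sum {α : Type*} {x w : ℕ → α → ℝ} (hw1 : ∀ j, w 1 j = 1)
    (hwrec : ∀ t j, w (t + 1) j = w t j * exp (x t j)) (n : ℕ) (i : α) :
    w (n + 1) i = exp (∑ t ∈ Icc 1 n, x t i) := by
  induction n with
  | zero => simp [hw1]
  | succ n ih => rw [hwrec, ih, sum_Icc_succ_top (by omega), exp_add]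

section Potential

variable {ι : Type*} [Fintype ι]

theorem log_sum_mul_exp_sub_log_sum_le [Nonempty ι] {v x : ι → ℝ} (hv : ∀ j, 0 < v j)
    (hx : ∀ j, |x j| ≤ 1) :
    log (∑ j, v j * exp (x j)) - log (∑ j, v j) ≤
      ∑ j, v j / (∑ l, v l) * (x j + x j ^ 2) := by
  have hV : 0 < ∑ j, v j := sum_pos (fun j _ => hv j) univ_nonempty
  have hA : 0 < ∑ j, v j * exp (x j) :=
    sum_pos (fun j _ => mul_pos (hv j) (exp_pos _)) univ_nonempty
  have hgrowth : ∑ j, v j * exp (x j) - ∑ j, v j ≤ ∑ j, v j * (x j + x j ^ 2) := by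
    rw [← sum_sub_distrib]
    gcongr with j
    nlinarith [hv j, exp_le_one_add_add_sq_s15 (hx j)]
  calc log (∑ j, v j * exp (x j)) - log (∑ j, v j)
      = log ((∑ j, v j * exp (x j)) / ∑ j, v j) := (log_div hA.ne' hV.ne').symm
    _ ≤ (∑ j, v j * exp (x j)) / (∑ j, v j) - 1 := log_le_sub_one_of_pos (div_pos hA hV)
    _ = (∑ j, v j * exp (x j) - ∑ j, v j) / ∑ j, v j := by field_simp
    _ ≤ (∑ j, v j * (x j + x j ^ 2)) / ∑ j, v j := by gcongr
    _ = ∑ j, v j / (∑ l, v l) * (x j + x j ^ 2) := by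
      rw [sum_div]
      exact sum_congr rfl fun j _ => div_mul_eq_mul_div _ _ _ |>.symm

theorem sum_le_log_card_add_sum {x w : ℕ → ι → ℝ} (hw1 : ∀ j, w 1 j = 1)
    (hwrec : ∀ t j, w (t + 1) j = w t j * exp (x t j)) (hx : ∀ t j, |x t j| ≤ 1) (i : ι) (T : ℕ) :
    ∑ t ∈ Icc 1 T, x t i ≤
      log (Fintype.card ι) + ∑ t ∈ Icc 1 T, ∑ j, w t j / (∑ l, w t l) * (x t j + x t j ^ 2) := by
  have : Nonempty ι := ⟨i⟩
  set Φ : ℕ → ℝ := fun t => log (∑ j, w t j)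
  have hpos : ∀ n j, 0 < w (n + 1) j := fun n j => by
    rw [weight_succ_eq_exp_sum hw1 hwrec]; exact exp_pos _
  have hlower : ∑ t ∈ Icc 1 T, x t i ≤ Φ (T + 1) := by
    rw [← log_exp (∑ t ∈ Icc 1 T, x t i), ← weight_succ_eq_exp_sum hw1 hwrec]
    exact log_le_log (hpos T i) (single_le_sum (fun j _ => (hpos T j).le) (mem_univ i))
  have hstart : Φ 1 = log (Fintype.card ι) := by simp [Φ, hw1]
  have hstep : ∀ t ∈ Icc 1 T, Φ (t + 1) - Φ t ≤
      ∑ j, w t j / (∑ l, w t l) * (x t j + x t j ^ 2) := by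
    intro t ht
    obtain ⟨n, rfl⟩ : ∃ n, t = n + 1 := ⟨t - 1, by grind⟩
    simp only [Φ, hwrec (n + 1)]
    exact log_sum_mul_exp_sub_log_sum_le (hpos n) (hx _)
  have htelescope : ∑ t ∈ Icc 1 T, (Φ (t + 1) - Φ t) = Φ (T + 1) - Φ 1 := by
    rw [← Ico_add_one_right_eq_Icc, sum_Ico_sub _ (by omega)]
  linarith [sum_le_sum hstep]

end Potential

theorem div_le_mix_div_one_sub {a b γ c : ℝ} (hγ : γ < 1) (hc : 0 ≤ c) :
    a / b ≤ ((1 - γ) * a / b + c) / (1 - γ) := by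
  rw [le_div_iff₀ (by linarith), mul_div_assoc]
  linarith

theorem multiplicative_weights_regret_general
    (k : ℕ) (T : ℕ) (η γ : ℝ) (hη : 0 < η) (hγ0 : 0 ≤ γ) (hγ1 : γ < 1)
    (gt : ℕ → Fin k → ℝ) (hgt : ∀ t j, 0 ≤ gt t j) (hηgt : ∀ t j, η * gt t j ≤ 1)
    (w : ℕ → Fin k → ℝ) (hw1 : ∀ j, w 1 j = 1)
    (hwrec : ∀ t j, w (t + 1) j = w t j * Real.exp (η * gt t j))
    (p : ℕ → Fin k → ℝ)
    (hp : ∀ t j, p t j = (1 - γ) * w t j / (∑ l, w t l) + γ / k) :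
    ∀ i : Fin k,
      (∑ t ∈ Finset.Icc 1 T, gt t i) -
        (1 / (1 - γ)) * ∑ t ∈ Finset.Icc 1 T, ∑ j, p t j * gt t j ≤
      Real.log k / η +
        (η / (1 - γ)) * ∑ t ∈ Finset.Icc 1 T, ∑ j, p t j * (gt t j) ^ 2 := by
  intro i
  have hηg : ∀ t j, 0 ≤ η * gt t j := fun t j => mul_nonneg hη.le (hgt t j)
  have hpotential := sum_le_log_card_add_sum hw1 hwrec
    (fun t j => abs_le.mpr ⟨by linarith [hηg t j], hηgt t j⟩) i T
  have hmix : ∀ t j, w t j / (∑ l, w t l) ≤ p t j / (1 - γ) := fun t j => by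
    rw [hp]
    exact div_le_mix_div_one_sub hγ1 (by positivity)
  have hsum : ∑ t ∈ Icc 1 T, ∑ j, w t j / (∑ l, w t l) * (η * gt t j + (η * gt t j) ^ 2) ≤
      η / (1 - γ) * ∑ t ∈ Icc 1 T, ∑ j, p t j * gt t j +
        η ^ 2 / (1 - γ) * ∑ t ∈ Icc 1 T, ∑ j, p t j * gt t j ^ 2 := by
    simp only [mul_sum, ← sum_add_distrib]
    gcongr with t _ j
    calc _ ≤ p t j / (1 - γ) * (η * gt t j + (η * gt t j) ^ 2) :=
          mul_le_mul_of_nonneg_right (hmix t j) (add_nonneg (hηg t j) (sq_nonneg _))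
      _ = _ := by ring
  rw [Fintype.card_fin, ← mul_sum] at hpotential
  set A := ∑ t ∈ Icc 1 T, gt t i
  set B := ∑ t ∈ Icc 1 T, ∑ j, p t j * gt t j
  set C := ∑ t ∈ Icc 1 T, ∑ j, p t j * gt t j ^ 2
  calc A - 1 / (1 - γ) * B = (η * A - η / (1 - γ) * B) / η := by field_simp
    _ ≤ (log k + η ^ 2 / (1 - γ) * C) / η := by gcongr; linarith
    _ = log k / η + η / (1 - γ) * C := by field_simp

theorem multiplicative_weights_regret
    (k : ℕ) (hk : 2 ≤ k) (T : ℕ) (η γ : ℝ) (hη : 0 < η) (hγ0 : 0 ≤ γ) (hγ1 : γ < 1)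
    (gt : ℕ → Fin k → ℝ) (hgt : ∀ t j, 0 ≤ gt t j) (hηgt : ∀ t j, η * gt t j ≤ 1)
    (w : ℕ → Fin k → ℝ) (hw1 : ∀ j, w 1 j = 1)
    (hwrec : ∀ t j, w (t + 1) j = w t j * Real.exp (η * gt t j))
    (p : ℕ → Fin k → ℝ)
    (hp : ∀ t j, p t j = (1 - γ) * w t j / (∑ l, w t l) + γ / k) :
    ∀ i : Fin k,
      (∑ t ∈ Finset.Icc 1 T, gt t i) -
        (1 / (1 - γ)) * ∑ t ∈ Finset.Icc 1 T, ∑ j, p t j * gt t j ≤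
      Real.log k / η +
        (η / (1 - γ)) * ∑ t ∈ Finset.Icc 1 T, ∑ j, p t j * (gt t j) ^ 2 :=
  multiplicative_weights_regret_general k T η γ hη hγ0 hγ1 gt hgt hηgt w hw1 hwrec p hp
end
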